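/- arXiv:0706.2309 — 2 statements merged into one kernel-verified Lean document; each statement's English description precedes it below -/
import Mathlib

section
/- Let f_u, f_v, g_u, g_v, ρ be real numbers with f_u > 0, g_v < 0, f_u·g_v - f_v·g_u > 0, f_u + g_v < 0, and ρ > 0. Define detB = f_u·g_v - f_v·g_u, d_k(γ) = (γ²·detB + γ·ρ·|g_v|)/(ρ·(γ·f_u - ρ)), the symmetry point γ⁽ˢ⁾ = ρ/f_u and d⁽ˢ⁾ = (detB + |f_v·g_u|)/f_u². Then f_v·g_u < 0, and for every real t ≠ 0 one has d_k(γ⁽ˢ⁾ + t) + d_k(γ⁽ˢ⁾ - t) = 2·d⁽ˢ⁾; that is, the curve Λ_k = {(γ, d_k(γ))} is symmetric with respect to the point (γ⁽ˢ⁾, d⁽ˢ⁾). -/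
/-!
Writing `γ f_u - ρ = f_u (γ - γ⁽ˢ⁾)`, the curve `d_k` is a quadratic over a linear function
vanishing at `γ⁽ˢ⁾`. Such a function is a line plus a multiple of `1 / (γ - γ⁽ˢ⁾)`, hence point
symmetric about `γ⁽ˢ⁾`; the centre's height simplifies to `d⁽ˢ⁾` because
`detB + f_u |g_v| = -f_v g_u = |f_v g_u|`.
-/

theorem add_reflect_eq_of_eq_quadratic_div_linear {f : ℝ → ℝ} {a b c p : ℝ}
    (hf : ∀ x, f x = (a * x ^ 2 + b * x) / (c * (x - p))) {t : ℝ} (ht : t ≠ 0) :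
    f (p + t) + f (p - t) = 2 * (2 * a * p + b) / c := by
  rw [hf, hf, add_sub_cancel_left, sub_sub_cancel_left, mul_neg, div_neg, ← sub_eq_add_neg,
    ← sub_div, mul_comm c t, ← div_div]
  field_simp
  ring

theorem mul_neg_of_det_pos {f_u f_v g_u g_v : ℝ} (hfu : 0 < f_u) (hgv : g_v < 0)
    (hdet : 0 < f_u * g_v - f_v * g_u) : f_v * g_u < 0 := by
  nlinarith [mul_neg_of_pos_of_neg hfu hgv]

theorem curve_symmetry_general (f_u f_v g_u g_v ρ : ℝ)
    (hfu : f_u > 0) (hgv : g_v < 0)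
    (hdet : f_u * g_v - f_v * g_u > 0) (hρ : ρ > 0)
    (detB : ℝ) (hdetB : detB = f_u * g_v - f_v * g_u)
    (d_k : ℝ → ℝ)
    (hd_k : ∀ γ, d_k γ = (γ^2 * detB + γ * ρ * |g_v|) / (ρ * (γ * f_u - ρ)))
    (γs ds : ℝ) (hγs : γs = ρ / f_u) (hds : ds = (detB + |f_v * g_u|) / f_u^2) :
    f_v * g_u < 0 ∧ ∀ t : ℝ, t ≠ 0 → d_k (γs + t) + d_k (γs - t) = 2 * ds := by
  have hfvgu : f_v * g_u < 0 := mul_neg_of_det_pos hfu hgv hdet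
  refine ⟨hfvgu, fun t ht => ?_⟩
  have hd_k' : ∀ γ, d_k γ = (detB * γ ^ 2 + ρ * |g_v| * γ) / ((ρ * f_u) * (γ - γs)) := by
    intro γ
    rw [hd_k, hγs]
    congr 1
    · ring
    · field_simp
  have habs : detB + f_u * |g_v| = |f_v * g_u| := by
    rw [abs_of_neg hgv, abs_of_neg hfvgu, hdetB]
    ring
  rw [add_reflect_eq_of_eq_quadratic_div_linear hd_k' ht, hds, ← habs, hγs]
  field_simp
  ring

theorem curve_symmetry (f_u f_v g_u g_v ρ : ℝ)
    (hfu : f_u > 0) (hgv : g_v < 0)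
    (hdet : f_u * g_v - f_v * g_u > 0) (htr : f_u + g_v < 0) (hρ : ρ > 0)
    (detB : ℝ) (hdetB : detB = f_u * g_v - f_v * g_u)
    (d_k : ℝ → ℝ)
    (hd_k : ∀ γ, d_k γ = (γ^2 * detB + γ * ρ * |g_v|) / (ρ * (γ * f_u - ρ)))
    (γs ds : ℝ) (hγs : γs = ρ / f_u) (hds : ds = (detB + |f_v * g_u|) / f_u^2) :
    f_v * g_u < 0 ∧ ∀ t : ℝ, t ≠ 0 → d_k (γs + t) + d_k (γs - t) = 2 * ds :=
  curve_symmetry_general f_u f_v g_u g_v ρ hfu hgv hdet hρ detB hdetB d_k hd_k γs ds hγs hds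
end

section
/- Let β, α, σ be real numbers with β > 0, α < 0, α + σ < 0, and σ ≥ 0, and set s = √(β/(-α)) and r = √(β/(-(α+σ))). Then the set of nonzero solutions (y₁, y₂) ∈ ℝ² \ {(0,0)} of the system (β + α·y₁² + σ·y₂²)·y₁ = 0 and (β + α·y₂² + σ·y₁²)·y₂ = 0 consists of exactly eight points: (±s, 0), (0, ±s), (r, ±r), and (-r, ±r). -/
/-!
On a coordinate axis one equation holds trivially and the other reads `β + α t² = 0`,
whose roots are `±s`. Off the axes both brackets vanish; their difference is
`(α - σ)(y₁² - y₂²)`, and `α < 0 ≤ σ` forces `y₁² = y₂²`, after which each coordinate solves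
`β + (α + σ) t² = 0`, i.e. equals `±r`.
-/

theorem add_mul_sq_eq_zero_iff {β c x : ℝ} (hβ : 0 ≤ β) (hc : c < 0) :
    β + c * x ^ 2 = 0 ↔ x = √(β / -c) ∨ x = -√(β / -c) := by
  rw [← sq_eq_sq_iff_eq_or_eq_neg, Real.sq_sqrt (div_nonneg hβ (neg_nonneg.mpr hc.le)),
    eq_div_iff (neg_ne_zero.mpr hc.ne)]
  constructor <;> intro h <;> linarith

theorem coupled_brackets_eq_zero_iff {β α σ x y : ℝ} (hασ : α ≠ σ) (hασ' : α + σ ≠ 0) :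
    (β + α * x ^ 2 + σ * y ^ 2 = 0 ∧ β + α * y ^ 2 + σ * x ^ 2 = 0) ↔
      (β + (α + σ) * x ^ 2 = 0 ∧ β + (α + σ) * y ^ 2 = 0) := by
  have sq_eq_of {a : ℝ} (ha : a ≠ 0) (h : a * (x ^ 2 - y ^ 2) = 0) : x ^ 2 = y ^ 2 := by
    linarith [(mul_eq_zero.mp h).resolve_left ha]
  constructor
  · rintro ⟨h₁, h₂⟩
    have hxy := sq_eq_of (sub_ne_zero.mpr hασ) (by linear_combination h₁ - h₂)
    exact ⟨by linear_combination h₁ + σ * hxy, by linear_combination h₂ - σ * hxy⟩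
  · rintro ⟨h₁, h₂⟩
    have hxy := sq_eq_of hασ' (by linear_combination h₁ - h₂)
    exact ⟨by linear_combination h₁ - σ * hxy, by linear_combination h₂ + σ * hxy⟩

theorem eight_steady_states (β α σ : ℝ) (hβ : β > 0) (hα : α < 0)
    (hασ : α + σ < 0) (hσ : σ ≥ 0)
    (s r : ℝ) (hs : s = Real.sqrt (β / (-α))) (hr : r = Real.sqrt (β / (-(α + σ)))) :
    {p : ℝ × ℝ | p ≠ (0, 0) ∧
        (β + α * p.1^2 + σ * p.2^2) * p.1 = 0 ∧
        (β + α * p.2^2 + σ * p.1^2) * p.2 = 0} =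
      {(s, 0), (-s, 0), (0, s), (0, -s), (r, r), (r, -r), (-r, r), (-r, -r)} := by
  have hs₀ : s ≠ 0 := hs ▸ (Real.sqrt_pos.mpr (div_pos hβ (neg_pos.mpr hα))).ne'
  have hr₀ : r ≠ 0 := hr ▸ (Real.sqrt_pos.mpr (div_pos hβ (neg_pos.mpr hασ))).ne'
  have on_axis (t : ℝ) : β + α * t ^ 2 = 0 ↔ t = s ∨ t = -s :=
    hs ▸ add_mul_sq_eq_zero_iff hβ.le hα
  have on_diagonal (t : ℝ) : β + (α + σ) * t ^ 2 = 0 ↔ t = r ∨ t = -r :=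
    hr ▸ add_mul_sq_eq_zero_iff hβ.le hασ
  ext ⟨x, y⟩
  by_cases hx : x = 0 <;> by_cases hy : y = 0
  · simp [hx, hy, hs₀, hr₀, hs₀.symm, hr₀.symm]
  · simp [hx, hy, hs₀, hr₀, hs₀.symm, hr₀.symm, on_axis]
  · simp [hx, hy, hs₀, hr₀, hs₀.symm, hr₀.symm, on_axis]
  · simp [hx, hy, coupled_brackets_eq_zero_iff (hα.trans_le hσ).ne hασ.ne, on_diagonal]
    tauto
end
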